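/- arXiv:2111.01757 — 2 statements merged into one kernel-verified Lean document; each statement's English description precedes it below -/
import Mathlib

section
/- lim_{L→0⁺} lim_{ε→0⁺} (1/(2π√ε)) · ∫_ε^L ∫_ε^L (L₁ + L₂ + L₁L₂/ε)^{−3/2} dL₂ dL₁ = 1/3. -/
/-! The inner integral is elementary, since `x + y + x y / ε` is affine in `y` with slope
`(ε + x) / ε`. What remains is `2ε` times an integral of
`1 / ((ε + x) √(2x + ε)) - 1 / ((ε + x) √((1 + L/ε) x + L))`; both terms have the form
`1 / ((a + x) √(b x + c))` with `a b - c = ε`, and integrate to arctangents. With `t = L / ε` the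
scaled double integral is exactly `(2/π) (2 arctan √(1 + 2t) - arctan √(2t + t²) - π/3)`. As
`ε → 0⁺` we have `t → ∞`, every arctangent tends to `π/2`, and the limit is `(2/π)(π/2 - π/3) = 1/3`
for every `L > 0`. -/

open MeasureTheory Filter Real Set intervalIntegral

lemma rpow_neg_one_half_eq_one_div_sqrt {x : ℝ} (hx : 0 ≤ x) : x ^ (-(1:ℝ)/2) = 1 / √x := by
  rw [neg_div, rpow_neg hx, sqrt_eq_rpow, one_div, one_div]

lemma integral_affine_rpow_neg_three_halves {p q u v : ℝ} (hq : q ≠ 0)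
    (hu : 0 < p + q * u) (hv : 0 < p + q * v) :
    ∫ y in u..v, (p + q * y) ^ (-(3:ℝ)/2) = 2 / q * (1 / √(p + q * u) - 1 / √(p + q * v)) := by
  rw [integral_comp_add_mul (fun y => y ^ (-(3:ℝ)/2)) hq,
    integral_rpow (Or.inr ⟨by norm_num, notMem_uIcc_of_lt hu hv⟩), smul_eq_mul,
    show -(3:ℝ)/2 + 1 = -(1:ℝ)/2 by norm_num, rpow_neg_one_half_eq_one_div_sqrt hu.le,
    rpow_neg_one_half_eq_one_div_sqrt hv.le]
  field_simp
  ring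

lemma mul_add_pos_of_sub_pos {a b c x : ℝ} (hd : 0 < a * b - c) (hx : 0 < b * x + c) :
    0 < b * (a + x) := by
  linarith [show b * (a + x) = (a * b - c) + (b * x + c) by ring]

lemma hasDerivAt_arctan_sqrt {a b c x : ℝ} (hd : 0 < a * b - c) (hx : 0 < b * x + c) :
    HasDerivAt (fun x => 2 * arctan √((b * x + c) / (a * b - c)) / √(a * b - c))
      (1 / ((a + x) * √(b * x + c))) x := by
  have hu : HasDerivAt (fun x => (b * x + c) / (a * b - c)) (b / (a * b - c)) x := by
    simpa using (((hasDerivAt_id x).const_mul b).add_const c).div_const (a * b - c)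
  refine (((hu.sqrt (by positivity)).arctan.const_mul 2).div_const √(a * b - c)).congr_deriv ?_
  have hbax := mul_add_pos_of_sub_pos hd hx
  have h1 : 1 + (b * x + c) / (a * b - c) = b * (a + x) / (a * b - c) := by
    rw [one_add_div hd.ne']
    ring
  rw [sqrt_div hx.le, div_pow, sq_sqrt hx.le, sq_sqrt hd.le, h1]
  have : 0 < √(b * x + c) := sqrt_pos.2 hx
  have : 0 < √(a * b - c) := sqrt_pos.2 hd
  have : b ≠ 0 := left_ne_zero_of_mul hbax.ne'
  have : a + x ≠ 0 := right_ne_zero_of_mul hbax.ne'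
  generalize a * b - c = d at *
  field_simp

lemma intervalIntegrable_inv_mul_sqrt {a b c u v : ℝ} (hd : 0 < a * b - c)
    (hpos : ∀ x ∈ uIcc u v, 0 < b * x + c) :
    IntervalIntegrable (fun x => 1 / ((a + x) * √(b * x + c))) volume u v := by
  refine ContinuousOn.intervalIntegrable (continuousOn_const.div (by fun_prop) fun x hx => ?_)
  exact mul_ne_zero (right_ne_zero_of_mul (mul_add_pos_of_sub_pos hd (hpos x hx)).ne')
    (sqrt_pos.2 (hpos x hx)).ne'

lemma integral_inv_mul_sqrt {a b c u v : ℝ} (hd : 0 < a * b - c)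
    (hpos : ∀ x ∈ uIcc u v, 0 < b * x + c) :
    ∫ x in u..v, 1 / ((a + x) * √(b * x + c))
      = 2 * arctan √((b * v + c) / (a * b - c)) / √(a * b - c)
        - 2 * arctan √((b * u + c) / (a * b - c)) / √(a * b - c) :=
  integral_eq_sub_of_hasDerivAt (fun x hx => hasDerivAt_arctan_sqrt hd (hpos x hx))
    (intervalIntegrable_inv_mul_sqrt hd hpos)

lemma integral_rpow_add_add_mul_div {ε x L : ℝ} (hε : 0 < ε) (hx : 0 < x) (hL : 0 < L) :
    ∫ y in ε..L, (x + y + x * y / ε) ^ (-(3:ℝ)/2)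
      = 2 * ε * (1 / ((ε + x) * √(2 * x + ε)) - 1 / ((ε + x) * √((1 + L / ε) * x + L))) := by
  have hq : 0 < 1 + x / ε := by positivity
  simp_rw [show ∀ y, x + y + x * y / ε = x + (1 + x / ε) * y by intro y; ring]
  rw [integral_affine_rpow_neg_three_halves hq.ne' (by positivity) (by positivity),
    show x + (1 + x / ε) * ε = 2 * x + ε by field_simp; ring,
    show x + (1 + x / ε) * L = (1 + L / ε) * x + L by ring]
  have : 0 < √(2 * x + ε) := sqrt_pos.2 (by positivity)
  have : 0 < √((1 + L / ε) * x + L) := sqrt_pos.2 (by positivity)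
  field_simp

lemma integral_integral_rpow_add_add_mul_div {ε L : ℝ} (hε : 0 < ε) (hL : 0 < L) :
    ∫ x in ε..L, ∫ y in ε..L, (x + y + x * y / ε) ^ (-(3:ℝ)/2)
      = 4 * √ε * (2 * arctan √(1 + 2 * (L / ε)) - arctan √(2 * (L / ε) + (L / ε) ^ 2) - π / 3) := by
  have hmem : ∀ x ∈ uIcc ε L, 0 < x := fun x hx => (lt_min hε hL).trans_le hx.1
  have h₁ : ∀ x ∈ uIcc ε L, 0 < 2 * x + ε := fun x hx => by linarith [hmem x hx]
  have h₂ : ∀ x ∈ uIcc ε L, 0 < (1 + L / ε) * x + L := fun x hx => by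
    have := hmem x hx; positivity
  have hd₁ : ε * 2 - ε = ε := by ring
  have hd₂ : ε * (1 + L / ε) - L = ε := by field_simp; ring
  rw [integral_congr fun x hx => integral_rpow_add_add_mul_div hε (hmem x hx) hL,
    intervalIntegral.integral_const_mul,
    integral_sub (intervalIntegrable_inv_mul_sqrt (by linarith) h₁)
      (intervalIntegrable_inv_mul_sqrt (by rw [hd₂]; exact hε) h₂),
    integral_inv_mul_sqrt (by linarith) h₁, integral_inv_mul_sqrt (by rw [hd₂]; exact hε) h₂,
    hd₁, hd₂, show (2 * ε + ε) / ε = 3 by field_simp; ring, arctan_sqrt_three,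
    show (2 * L + ε) / ε = 1 + 2 * (L / ε) by field_simp; ring,
    show ((1 + L / ε) * ε + L) / ε = 1 + 2 * (L / ε) by field_simp; ring,
    show ((1 + L / ε) * L + L) / ε = 2 * (L / ε) + (L / ε) ^ 2 by field_simp; ring]
  have hs : 0 < √ε := sqrt_pos.2 hε
  generalize arctan √(1 + 2 * (L / ε)) = A
  generalize arctan √(2 * (L / ε) + (L / ε) ^ 2) = B
  field_simp
  rw [sq_sqrt hε.le]
  ring

lemma tendsto_arctan_sqrt_atTop : Tendsto (fun u => arctan √u) atTop (nhds (π / 2)) :=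
  (tendsto_arctan_atTop.mono_right nhdsWithin_le_nhds).comp tendsto_sqrt_atTop

lemma tendsto_two_arctan_sqrt_sub_arctan_sqrt :
    Tendsto (fun t => 2 * arctan √(1 + 2 * t) - arctan √(2 * t + t ^ 2)) atTop (nhds (π / 2)) := by
  have h₁ : Tendsto (fun t : ℝ => 1 + 2 * t) atTop atTop :=
    tendsto_atTop_add_const_left _ _ (tendsto_id.const_mul_atTop two_pos)
  have h₂ : Tendsto (fun t : ℝ => 2 * t + t ^ 2) atTop atTop :=
    (tendsto_id.const_mul_atTop two_pos).atTop_add_atTop (tendsto_pow_atTop two_ne_zero)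
  have := ((tendsto_arctan_sqrt_atTop.comp h₁).const_mul 2).sub (tendsto_arctan_sqrt_atTop.comp h₂)
  rwa [show 2 * (π / 2) - π / 2 = π / 2 by ring] at this

theorem stmt15 :
    ∃ h : ℝ → ℝ,
      (∀ L : ℝ, 0 < L →
        Tendsto (fun ε : ℝ =>
            (1 / (2 * Real.pi * Real.sqrt ε)) *
              ∫ L₁ in ε..L, ∫ L₂ in ε..L,
                (L₁ + L₂ + L₁ * L₂ / ε) ^ (-(3:ℝ)/2))
          (nhdsWithin 0 (Set.Ioi 0)) (nhds (h L))) ∧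
      Tendsto h (nhdsWithin 0 (Set.Ioi 0)) (nhds (1 / 3)) := by
  refine ⟨fun _ => 1 / 3, fun L hL => ?_, tendsto_const_nhds⟩
  have hratio : Tendsto (fun ε => L / ε) (nhdsWithin 0 (Ioi 0)) atTop :=
    tendsto_inv_nhdsGT_zero.const_mul_atTop hL
  have hlim := ((tendsto_two_arctan_sqrt_sub_arctan_sqrt.comp hratio).sub_const (π / 3)).const_mul
    (2 / π)
  rw [show 2 / π * (π / 2 - π / 3) = 1 / 3 by field_simp; ring] at hlim
  refine hlim.congr' ?_
  filter_upwards [self_mem_nhdsWithin] with ε (hε : 0 < ε)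
  have hs : 0 < √ε := sqrt_pos.2 hε
  rw [Function.comp_apply, integral_integral_rpow_add_add_mul_div hε hL]
  field_simp
  ring
end

section
/- Let g be a finite-dimensional Lie algebra over a field of characteristic zero with basis {t^a} and structure constants [t^a, t^b] = Σ_c f^{ab}_c t^c. Let Cl be the associative unital ℤ/2-graded algebra with odd generators e^a (one for each basis element of g) and e_a (one for each dual basis element of g*) subject to the relations e^a e^b + e^b e^a = 0, e_a e_b + e_b e_a = 0, and e^a e_b + e_b e^a = 2δ^a_b. Set Ω = Σ_{a,b,c} f^{ab}_c · e_a e_b e^c, an odd element. Then Ω² lies in the center of Cl; consequently the odd super-derivation D(x) = Ωx − (−1)^{|x|} xΩ satisfies D² = 0. -/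
/-- The structure constants of a Lie algebra with respect to a chosen basis:
`[t^a, t^b] = Σ_c f^{ab}_c t^c`. -/
noncomputable def structureConstants {K : Type*} [Field K]
    {g : Type*} [LieRing g] [LieAlgebra K g]
    {ι : Type*} (bV : Module.Basis ι K g) : ι → ι → ι → K :=
  fun a b c => (bV.repr ⁅bV a, bV b⁆) c

/-- The odd BRST-type element `Ω = Σ_{a,b,c} f^{ab}_c · e_a e_b e^c` built from odd
generators `e^a = E a` and `e_a = Ed a` in an associative algebra. -/
noncomputable def brstCharge {K : Type*} [Field K] {ι : Type*} [Fintype ι]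
    {A : Type*} [Ring A] [Algebra K A]
    (f : ι → ι → ι → K) (E Ed : ι → A) : A :=
  ∑ a, ∑ b, ∑ c, f a b c • (Ed a * Ed b * E c)

/-!
Write `Ω = Σ_c X_c e^c` with `X_c = Σ_{a,b} f^{ab}_c e_a e_b`. Moving `e^c` past `X_d` costs one
contraction, so `Ω² = Σ_{c,d} X_c X_d e^c e^d + 4 Σ_d (Σ_c X_c Σ_q f^{cq}_d e_q) e^d`. The first sum
vanishes because the even elements `X_c` commute with each other while `e^c e^d` is antisymmetric;
the second because `e_a e_b e_q` is cyclically symmetric in `a, b, q` while the cyclic sum of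
`Σ_c f^{ab}_c f^{cq}_d` vanishes by the Jacobi identity. Hence `Ω² = 0` on the nose, and both
claims follow.
-/

section StructureConstants

variable {K : Type*} [Field K] {g : Type*} [LieRing g] [LieAlgebra K g]
  {ι : Type*} (bV : Module.Basis ι K g)

lemma structureConstants_swap (a b c : ι) :
    structureConstants bV b a c = -structureConstants bV a b c := by
  rw [structureConstants, structureConstants, ← lie_skew (bV b) (bV a), map_neg, Finsupp.neg_apply]

lemma repr_lie_lie_basis [Fintype ι] (a b q r : ι) :
    bV.repr ⁅⁅bV a, bV b⁆, bV q⁆ r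
      = ∑ c, structureConstants bV a b c * structureConstants bV c q r := by
  conv_lhs => rw [← bV.sum_repr ⁅bV a, bV b⁆]
  simp only [sum_lie, smul_lie, map_sum, map_smul, Finsupp.coe_finsetSum, Finset.sum_apply,
    Finsupp.smul_apply, smul_eq_mul, structureConstants]

lemma structureConstants_jacobi [Fintype ι] (a b q r : ι) :
    ∑ c, (structureConstants bV a b c * structureConstants bV c q r
      + structureConstants bV b q c * structureConstants bV c a r
      + structureConstants bV q a c * structureConstants bV c b r) = 0 := by
  have jacobi : ⁅⁅bV a, bV b⁆, bV q⁆ + ⁅⁅bV b, bV q⁆, bV a⁆ + ⁅⁅bV q, bV a⁆, bV b⁆ = 0 := by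
    rw [← lie_skew, ← lie_skew ⁅bV b, bV q⁆, ← lie_skew ⁅bV q, bV a⁆, ← neg_add, ← neg_add,
      add_rotate, lie_jacobi, neg_zero]
  simpa only [Finset.sum_add_distrib, repr_lie_lie_basis, map_add, Finsupp.add_apply, map_zero,
    Finsupp.zero_apply] using congrArg (fun x => bV.repr x r) jacobi

end StructureConstants

lemma commute_mul_of_anticommute {R : Type*} [Ring R] {x y z : R}
    (hx : x * z = -(z * x)) (hy : y * z = -(z * y)) : Commute (x * y) z := by
  rw [Commute, SemiconjBy, mul_assoc, hy, mul_neg, ← mul_assoc, hx, neg_mul, neg_neg, mul_assoc]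

lemma Fintype.sum_rotate {ι M : Type*} [Fintype ι] [AddCommMonoid M] (G : ι → ι → ι → M) :
    ∑ a, ∑ b, ∑ c, G b c a = ∑ a, ∑ b, ∑ c, G a b c := by
  rw [Finset.sum_comm]
  exact Finset.sum_congr rfl fun b _ => Finset.sum_comm

lemma sum_smul_eq_zero_of_cyclic {K : Type*} [Field K] {ι : Type*} [Fintype ι]
    {M : Type*} [AddCommGroup M] [Module K M] (h3 : (3 : K) ≠ 0)
    (F : ι → ι → ι → K) (T : ι → ι → ι → M)
    (hF : ∀ a b c, F a b c + F b c a + F c a b = 0) (hT : ∀ a b c, T b c a = T a b c) :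
    ∑ a, ∑ b, ∑ c, F a b c • T a b c = 0 := by
  set S := ∑ a, ∑ b, ∑ c, F a b c • T a b c
  have h1 : ∑ a, ∑ b, ∑ c, F b c a • T a b c = S := by
    simpa only [hT] using Fintype.sum_rotate fun a b c => F a b c • T a b c
  have h2 : ∑ a, ∑ b, ∑ c, F c a b • T a b c = S := by
    rw [← h1]; simpa only [hT] using Fintype.sum_rotate fun a b c => F b c a • T a b c
  rw [← smul_eq_zero_iff_right h3]
  calc (3 : K) • S = S + S + S := by
        rw [show (3 : K) = 1 + 1 + 1 by norm_num, add_smul, add_smul, one_smul]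
    _ = S + ∑ a, ∑ b, ∑ c, F b c a • T a b c + ∑ a, ∑ b, ∑ c, F c a b • T a b c := by
      rw [h1, h2]
    _ = ∑ a, ∑ b, ∑ c, (F a b c + F b c a + F c a b) • T a b c := by
      simp only [S, add_smul, Finset.sum_add_distrib]
    _ = 0 := by simp only [hF, zero_smul, Finset.sum_const_zero]

section BrstCharge

variable {K : Type*} [Field K] {ι : Type*} [Fintype ι] {A : Type*} [Ring A] [Algebra K A]
  (f : ι → ι → ι → K) {E Ed : ι → A}

noncomputable def brstCoeff (Ed : ι → A) (c : ι) : A :=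
  ∑ a, ∑ b, f a b c • (Ed a * Ed b)

lemma brstCharge_eq_sum_brstCoeff_mul : brstCharge f E Ed = ∑ c, brstCoeff f Ed c * E c := by
  simp only [brstCharge, brstCoeff, Finset.sum_mul, smul_mul_assoc]
  exact (Fintype.sum_rotate fun a b c => f a b c • (Ed a * Ed b * E c)).symm

lemma E_mul_brstCoeff [DecidableEq ι] (hskew : ∀ a b c, f b a c = -f a b c)
    (hEEd : ∀ a b, E a * Ed b + Ed b * E a = if a = b then (2 : A) else 0) (c d : ι) :
    E c * brstCoeff f Ed d = brstCoeff f Ed d * E c + (4 : K) • ∑ b, f c b d • Ed b := by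
  -- contracting `e^c` with `e_a` or with `e_b` gives the same contribution, by antisymmetry of `f`
  have E_mul_Ed : ∀ b, E c * Ed b = (if c = b then (2 : K) else 0) • 1 - Ed b * E c := fun b => by
    rw [eq_sub_iff_add_eq, hEEd]; split_ifs <;> simp [ofNat_smul_eq_nsmul]
  have h : ∀ a b, E c * (Ed a * Ed b) = Ed a * Ed b * E c
      + (if c = a then (2 : K) else 0) • Ed b - (if c = b then (2 : K) else 0) • Ed a := by
    intro a b
    rw [← mul_assoc, E_mul_Ed, sub_mul, mul_assoc, E_mul_Ed]
    simp only [smul_mul_assoc, one_mul, mul_sub, mul_smul_comm, mul_one, mul_assoc]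
    abel
  have h₁ : ∑ a, ∑ b, f a b d • ((if c = a then (2 : K) else 0) • Ed b)
      = (2 : K) • ∑ b, f c b d • Ed b := by
    simp only [ite_smul, zero_smul, smul_ite, smul_zero, Finset.sum_ite_irrel, Finset.sum_const_zero,
      Finset.sum_ite_eq, Finset.mem_univ, if_true, Finset.smul_sum, smul_comm (2 : K)]
  have h₂ : ∑ a, ∑ b, f a b d • ((if c = b then (2 : K) else 0) • Ed a)
      = -((2 : K) • ∑ b, f c b d • Ed b) := by
    simp only [ite_smul, zero_smul, smul_ite, smul_zero, Finset.sum_ite_eq, Finset.mem_univ,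
      if_true, Finset.smul_sum, smul_comm (2 : K), hskew c _ d, neg_smul, Finset.sum_neg_distrib]
  simp only [brstCoeff, Finset.mul_sum, Finset.sum_mul, mul_smul_comm, smul_mul_assoc, h, smul_add,
    smul_sub, Finset.sum_add_distrib, Finset.sum_sub_distrib, h₁, h₂]
  rw [show (4 : K) = 2 + 2 by norm_num, add_smul]
  abel

variable (hEdEd : ∀ a b, Ed a * Ed b + Ed b * Ed a = 0)
include hEdEd

omit [Fintype ι] [Algebra K A] in
lemma commute_Ed_mul_Ed (a b p : ι) : Commute (Ed a * Ed b) (Ed p) :=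
  commute_mul_of_anticommute (eq_neg_of_add_eq_zero_left (hEdEd a p))
    (eq_neg_of_add_eq_zero_left (hEdEd b p))

lemma commute_brstCoeff_Ed (c p : ι) : Commute (brstCoeff f Ed c) (Ed p) :=
  Commute.sum_left _ _ _ fun a _ => Commute.sum_left _ _ _ fun b _ =>
    (commute_Ed_mul_Ed hEdEd a b p).smul_left _

lemma commute_brstCoeff (c d : ι) : Commute (brstCoeff f Ed c) (brstCoeff f Ed d) :=
  Commute.sum_right _ _ _ fun a _ => Commute.sum_right _ _ _ fun b _ =>
    ((commute_brstCoeff_Ed f hEdEd c a).mul_right (commute_brstCoeff_Ed f hEdEd c b)).smul_right _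

lemma sum_brstCoeff_mul_eq_zero (h3 : (3 : K) ≠ 0)
    (hjac : ∀ a b q r, ∑ c, (f a b c * f c q r + f b q c * f c a r + f q a c * f c b r) = 0)
    (d : ι) : ∑ c, brstCoeff f Ed c * ∑ q, f c q d • Ed q = 0 := by
  have expand : ∑ c, brstCoeff f Ed c * ∑ q, f c q d • Ed q
      = ∑ q, ∑ a, ∑ b, (∑ c, f a b c * f c q d) • (Ed a * Ed b * Ed q) := by
    simp only [brstCoeff, Finset.sum_mul, Finset.mul_sum, smul_mul_smul_comm, Finset.sum_smul]
    rw [Finset.sum_comm]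
    exact Finset.sum_congr rfl fun q _ => Fintype.sum_rotate _
  rw [expand, Fintype.sum_rotate fun a b q => (∑ c, f a b c * f c q d) • (Ed a * Ed b * Ed q)]
  refine sum_smul_eq_zero_of_cyclic h3 _ _ (fun a b q => ?_) fun a b q => ?_
  · simpa only [Finset.sum_add_distrib] using hjac a b q d
  · rw [(commute_Ed_mul_Ed hEdEd b q a).eq, mul_assoc]

lemma sum_brstCoeff_mul_brstCoeff_mul_eq_zero (h2 : (2 : K) ≠ 0)
    (hEE : ∀ a b, E a * E b + E b * E a = 0) :
    ∑ c, ∑ d, brstCoeff f Ed c * brstCoeff f Ed d * (E c * E d) = 0 := by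
  set S := ∑ c, ∑ d, brstCoeff f Ed c * brstCoeff f Ed d * (E c * E d) with hS
  have hneg : S = -S := by
    conv_lhs => rw [hS, Finset.sum_comm]
    simp only [hS, ← Finset.sum_neg_distrib]
    refine Finset.sum_congr rfl fun c _ => Finset.sum_congr rfl fun d _ => ?_
    rw [(commute_brstCoeff f hEdEd d c).eq, eq_neg_of_add_eq_zero_left (hEE d c), mul_neg]
  rw [← smul_eq_zero_iff_right h2, two_smul]
  nth_rewrite 1 [hneg]
  exact neg_add_cancel S

lemma brstCharge_mul_self [DecidableEq ι] (h2 : (2 : K) ≠ 0) (h3 : (3 : K) ≠ 0)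
    (hskew : ∀ a b c, f b a c = -f a b c)
    (hjac : ∀ a b q r, ∑ c, (f a b c * f c q r + f b q c * f c a r + f q a c * f c b r) = 0)
    (hEE : ∀ a b, E a * E b + E b * E a = 0)
    (hEEd : ∀ a b, E a * Ed b + Ed b * E a = if a = b then (2 : A) else 0) :
    brstCharge f E Ed * brstCharge f E Ed = 0 := by
  have term : ∀ c d, brstCoeff f Ed c * E c * (brstCoeff f Ed d * E d)
      = brstCoeff f Ed c * brstCoeff f Ed d * (E c * E d)
        + (4 : K) • (brstCoeff f Ed c * ∑ q, f c q d • Ed q) * E d := fun c d => by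
    rw [mul_assoc, ← mul_assoc (E c), E_mul_brstCoeff f hskew hEEd]
    simp only [add_mul, mul_add, mul_assoc, smul_mul_assoc, mul_smul_comm]
  calc brstCharge f E Ed * brstCharge f E Ed
      = ∑ c, ∑ d, brstCoeff f Ed c * E c * (brstCoeff f Ed d * E d) := by
        rw [brstCharge_eq_sum_brstCoeff_mul, Finset.sum_mul_sum]
    _ = ∑ c, ∑ d, brstCoeff f Ed c * brstCoeff f Ed d * (E c * E d)
        + (4 : K) • ∑ d, (∑ c, brstCoeff f Ed c * ∑ q, f c q d • Ed q) * E d := by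
        simp only [term, Finset.sum_add_distrib, Finset.smul_sum, Finset.sum_mul, smul_mul_assoc]
        exact congrArg _ Finset.sum_comm
    _ = 0 := by
        simp only [sum_brstCoeff_mul_brstCoeff_mul_eq_zero f hEdEd h2 hEE,
          sum_brstCoeff_mul_eq_zero f hEdEd h3 hjac, zero_mul, Finset.sum_const_zero, smul_zero,
          add_zero]

end BrstCharge

theorem stmt16_general {K : Type*} [Field K] [CharZero K]
    {g : Type*} [LieRing g] [LieAlgebra K g]
    {ι : Type*} [Fintype ι] [DecidableEq ι] (bV : Module.Basis ι K g)
    {A : Type*} [Ring A] [Algebra K A]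
    (E Ed : ι → A)
    -- Clifford-type relations among the odd generators:
    (hEE : ∀ a b, E a * E b + E b * E a = 0)
    (hEdEd : ∀ a b, Ed a * Ed b + Ed b * Ed a = 0)
    (hEEd : ∀ a b, E a * Ed b + Ed b * E a = if a = b then (2 : A) else 0) :
    -- Ω² is central
    (∀ x : A,
      (brstCharge (structureConstants bV) E Ed) ^ 2 * x
        = x * (brstCharge (structureConstants bV) E Ed) ^ 2) ∧
    -- consequently the odd super-derivation D(x) = Ωx − (−1)^{|x|} xΩ squares to zero:
    -- for x of parity ε (ε = ±1), D²(x) = Ω·(Ωx − ε xΩ) + ε (Ωx − ε xΩ)·Ω = 0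
    (∀ (x : A) (ε : K), (ε = 1 ∨ ε = -1) →
      (brstCharge (structureConstants bV) E Ed) *
          ((brstCharge (structureConstants bV) E Ed) * x -
            ε • (x * (brstCharge (structureConstants bV) E Ed)))
        + ε • (((brstCharge (structureConstants bV) E Ed) * x -
            ε • (x * (brstCharge (structureConstants bV) E Ed))) *
              (brstCharge (structureConstants bV) E Ed)) = 0) := by
  set Ω := brstCharge (structureConstants bV) E Ed
  have hΩ : Ω * Ω = 0 := brstCharge_mul_self _ hEdEd two_ne_zero three_ne_zero
    (structureConstants_swap bV) (structureConstants_jacobi bV) hEE hEEd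
  refine ⟨fun x => by rw [sq, hΩ, zero_mul, mul_zero], fun x ε _ => ?_⟩
  simp only [mul_sub, sub_mul, mul_smul_comm, smul_mul_assoc, smul_sub, ← mul_assoc, hΩ, zero_mul]
  simp only [mul_assoc, hΩ, mul_zero, smul_zero, sub_zero, zero_sub, neg_add_cancel]

theorem stmt16 {K : Type*} [Field K] [CharZero K]
    {g : Type*} [LieRing g] [LieAlgebra K g] [FiniteDimensional K g]
    {ι : Type*} [Fintype ι] [DecidableEq ι] (bV : Module.Basis ι K g)
    {A : Type*} [Ring A] [Algebra K A]
    (E Ed : ι → A)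
    -- Clifford-type relations among the odd generators:
    (hEE : ∀ a b, E a * E b + E b * E a = 0)
    (hEdEd : ∀ a b, Ed a * Ed b + Ed b * Ed a = 0)
    (hEEd : ∀ a b, E a * Ed b + Ed b * E a = if a = b then (2 : A) else 0) :
    -- Ω² is central
    (∀ x : A,
      (brstCharge (structureConstants bV) E Ed) ^ 2 * x
        = x * (brstCharge (structureConstants bV) E Ed) ^ 2) ∧
    -- consequently the odd super-derivation D(x) = Ωx − (−1)^{|x|} xΩ squares to zero:
    -- for x of parity ε (ε = ±1), D²(x) = Ω·(Ωx − ε xΩ) + ε (Ωx − ε xΩ)·Ω = 0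
    (∀ (x : A) (ε : K), (ε = 1 ∨ ε = -1) →
      (brstCharge (structureConstants bV) E Ed) *
          ((brstCharge (structureConstants bV) E Ed) * x -
            ε • (x * (brstCharge (structureConstants bV) E Ed)))
        + ε • (((brstCharge (structureConstants bV) E Ed) * x -
            ε • (x * (brstCharge (structureConstants bV) E Ed))) *
              (brstCharge (structureConstants bV) E Ed)) = 0) :=
  stmt16_general bV E Ed hEE hEdEd hEEd
end
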